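/- Let 𝔸 be a symmetric strict monoidal category and let D be a cornering of 𝔸. Then for every object A of 𝔸, the object A^∘ is a right dual of A^• in the strict monoidal category H D of horizontal cells of D: the unit η : I → A^• ⊗ A^∘ given by the vertical composite of the •-receive corner above the ∘-send corner, and the counit ε : A^∘ ⊗ A^• → I given by the vertical composite of the ∘-receive corner above the •-send corner, satisfy the triangle (zig-zag) identities; these identities follow from the yanking equations. -/
import Mathlib


/-- A single-object double category: a horizontal edge monoid `H`, a vertical
edge monoid `V`, and cells indexed by top/bottom boundaries in `H` and
left/right boundaries in `V`, with associative and unital horizontal and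
vertical composition satisfying the interchange law, and with the horizontal
and vertical identity cells on the respective units coinciding. -/
structure SODC where
  H : Type
  V : Type
  hMul : H → H → H
  hOne : H
  vMul : V → V → V
  vOne : V
  hMul_assoc : ∀ a b c : H, hMul (hMul a b) c = hMul a (hMul b c)
  hOne_mul : ∀ a : H, hMul hOne a = a
  hMul_one : ∀ a : H, hMul a hOne = a
  vMul_assoc : ∀ x y z : V, vMul (vMul x y) z = vMul x (vMul y z)
  vOne_mul : ∀ x : V, vMul vOne x = x
  vMul_one : ∀ x : V, vMul x vOne = x
  /-- Cells, indexed by top, bottom (in `H`) and left, right (in `V`) boundaries. -/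
  Cell : H → H → V → V → Type
  /-- The horizontal identity cell on `x` (top and bottom boundary the unit). -/
  hid : ∀ x : V, Cell hOne hOne x x
  /-- The vertical identity cell on `a` (left and right boundary the unit). -/
  vid : ∀ a : H, Cell a a vOne vOne
  /-- Horizontal composition of cells. -/
  hcomp : ∀ {t b t' b' : H} {x y z : V},
    Cell t b x y → Cell t' b' y z → Cell (hMul t t') (hMul b b') x z
  /-- Vertical composition of cells. -/
  vcomp : ∀ {t m b : H} {x y x' y' : V},
    Cell t m x y → Cell m b x' y' → Cell t b (vMul x x') (vMul y y')
  hcomp_assoc : ∀ {t b t' b' t'' b'' : H} {x y z w : V}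
    (α : Cell t b x y) (β : Cell t' b' y z) (γ : Cell t'' b'' z w),
    HEq (hcomp (hcomp α β) γ) (hcomp α (hcomp β γ))
  hid_hcomp : ∀ {t b : H} {x y : V} (α : Cell t b x y), HEq (hcomp (hid x) α) α
  hcomp_hid : ∀ {t b : H} {x y : V} (α : Cell t b x y), HEq (hcomp α (hid y)) α
  vcomp_assoc : ∀ {t m m' b : H} {x y x' y' x'' y'' : V}
    (α : Cell t m x y) (β : Cell m m' x' y') (γ : Cell m' b x'' y''),
    HEq (vcomp (vcomp α β) γ) (vcomp α (vcomp β γ))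
  vid_vcomp : ∀ {t b : H} {x y : V} (α : Cell t b x y), HEq (vcomp (vid t) α) α
  vcomp_vid : ∀ {t b : H} {x y : V} (α : Cell t b x y), HEq (vcomp α (vid b)) α
  /-- The horizontal and vertical identity cells on the units coincide. -/
  square_one : vid hOne = hid vOne
  /-- The interchange law `(α | γ) / (β | δ) = (α / β) | (γ / δ)`. -/
  interchange : ∀ {t m b t' m' b' : H} {x y z x' y' z' : V}
    (α : Cell t m x y) (γ : Cell t' m' y z) (β : Cell m b x' y') (δ : Cell m' b' y' z'),
    vcomp (hcomp α γ) (hcomp β δ) = hcomp (vcomp α β) (vcomp γ δ)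
  hid_mul : ∀ x y : V, HEq (vcomp (hid x) (hid y)) (hid (vMul x y))
  vid_mul : ∀ a b : H, HEq (hcomp (vid a) (vid b)) (vid (hMul a b))

namespace SODC

/-- Transport a cell along equalities of its boundaries. -/
def cast (D : SODC) {t t' b b' : D.H} {l l' r r' : D.V}
    (ht : t = t') (hb : b = b') (hl : l = l') (hr : r = r')
    (α : D.Cell t b l r) : D.Cell t' b' l' r' := by
  cases ht; cases hb; cases hl; cases hr; exact α

/-- `X` and `Y` are isomorphic objects of the strict monoidal category `H D` of
horizontal cells of `D`: there are cells (with trivial top and bottom boundary)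
`f : X → Y` and `g : Y → X` whose horizontal composites are identities. -/
def HIso (D : SODC) (X Y : D.V) : Prop :=
  ∃ (f : D.Cell D.hOne D.hOne X Y) (g : D.Cell D.hOne D.hOne Y X),
    HEq (D.hcomp f g) (D.hid X) ∧ HEq (D.hcomp g f) (D.hid Y)

/-- `Y` is a right dual of `X` in the strict monoidal category `H D` of
horizontal cells of `D`: there are a unit `η : I → X ⊗ Y` and a counit
`ε : Y ⊗ X → I` satisfying the two triangle (zig-zag) identities.  (In `H D`,
composition is horizontal composition of cells and the tensor of morphisms is
vertical composition of cells.) -/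
def RightDual (D : SODC) (X Y : D.V) : Prop :=
  ∃ (η : D.Cell D.hOne D.hOne D.vOne (D.vMul X Y))
    (ε : D.Cell D.hOne D.hOne (D.vMul Y X) D.vOne),
    HEq (D.hcomp (D.vcomp η (D.hid X))
          (D.cast rfl rfl (D.vMul_assoc X Y X).symm rfl (D.vcomp (D.hid X) ε)))
        (D.hid X) ∧
    HEq (D.hcomp (D.vcomp (D.hid Y) η)
          (D.cast rfl rfl (D.vMul_assoc Y X Y) rfl (D.vcomp ε (D.hid Y))))
        (D.hid Y)

end SODC

/-- A cornering structure on a single-object double category `D`.  The vertical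
cells of `D` (cells with trivial left and right boundary, composed vertically
and tensored horizontally) form a strict monoidal category `𝔸 = V D`, which is
required to be symmetric via the braiding cells `braid`; and every object
`a` of `𝔸` (element of `D.H`) has polarized objects `a^∘ = circ a` and
`a^• = bullet a` in `D.V` together with four corner cells satisfying the
yanking equations. -/
structure Cornering (D : SODC) where
  /-- The braiding `σ_{a,b} : a ⊗ b → b ⊗ a` of `𝔸 = V D`, as a vertical cell. -/
  braid : ∀ a b : D.H, D.Cell (D.hMul a b) (D.hMul b a) D.vOne D.vOne
  braid_natural : ∀ {a b c d : D.H}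
    (f : D.Cell a b D.vOne D.vOne) (g : D.Cell c d D.vOne D.vOne),
    D.vcomp (D.hcomp f g) (braid b d) = D.vcomp (braid a c) (D.hcomp g f)
  braid_symm : ∀ a b : D.H, HEq (D.vcomp (braid a b) (braid b a)) (D.vid (D.hMul a b))
  braid_hexagon : ∀ a b c : D.H,
    HEq (braid (D.hMul a b) c)
      (D.vcomp (D.hcomp (D.vid a) (braid b c))
        (D.cast (D.hMul_assoc a c b) (D.hMul_assoc c a b) rfl rfl
          (D.hcomp (braid a c) (D.vid b))))
  /-- The polarized object `a^∘`. -/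
  circ : D.H → D.V
  /-- The polarized object `a^•`. -/
  bullet : D.H → D.V
  /-- The `∘`-send corner: top `a`, bottom `I`, left `I`, right `a^∘`. -/
  csend : ∀ a : D.H, D.Cell a D.hOne D.vOne (circ a)
  /-- The `∘`-receive corner: top `I`, bottom `a`, left `a^∘`, right `I`. -/
  crecv : ∀ a : D.H, D.Cell D.hOne a (circ a) D.vOne
  /-- The `•`-send corner: top `a`, bottom `I`, left `a^•`, right `I`. -/
  bsend : ∀ a : D.H, D.Cell a D.hOne (bullet a) D.vOne
  /-- The `•`-receive corner: top `I`, bottom `a`, left `I`, right `a^•`. -/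
  brecv : ∀ a : D.H, D.Cell D.hOne a D.vOne (bullet a)
  yank_circ_h : ∀ a : D.H, HEq (D.hcomp (csend a) (crecv a)) (D.vid a)
  yank_circ_v : ∀ a : D.H, HEq (D.vcomp (crecv a) (csend a)) (D.hid (circ a))
  yank_bullet_h : ∀ a : D.H, HEq (D.hcomp (brecv a) (bsend a)) (D.vid a)
  yank_bullet_v : ∀ a : D.H, HEq (D.vcomp (brecv a) (bsend a)) (D.hid (bullet a))

/-- A compact closed structure on the symmetric strict monoidal category
`𝔸 = V D` of vertical cells of `D`: every object `a` has a chosen dual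
`dual a` with unit `η_a : I → a ⊗ a*` and counit `ε_a : a* ⊗ a → I`
(as vertical cells) satisfying the triangle (snake) identities. -/
structure CompactStructure (D : SODC) where
  dual : D.H → D.H
  eta : ∀ a : D.H, D.Cell D.hOne (D.hMul a (dual a)) D.vOne D.vOne
  eps : ∀ a : D.H, D.Cell (D.hMul (dual a) a) D.hOne D.vOne D.vOne
  snake₁ : ∀ a : D.H,
    HEq (D.vcomp (D.hcomp (eta a) (D.vid a))
          (D.cast (D.hMul_assoc a (dual a) a).symm rfl rfl rfl
            (D.hcomp (D.vid a) (eps a))))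
        (D.vid a)
  snake₂ : ∀ a : D.H,
    HEq (D.vcomp (D.hcomp (D.vid (dual a)) (eta a))
          (D.cast (D.hMul_assoc (dual a) a (dual a)) rfl rfl rfl
            (D.hcomp (eps a) (D.vid (dual a)))))
        (D.vid (dual a))

/-- The unit `η : I → A^• ⊗ A^∘` in `H D`, given by the vertical composite of
the `•`-receive corner above the `∘`-send corner. -/
def cornerUnit (D : SODC) (C : Cornering D) (a : D.H) :
    D.Cell D.hOne D.hOne D.vOne (D.vMul (C.bullet a) (C.circ a)) :=
  D.cast rfl rfl (D.vOne_mul D.vOne) rfl (D.vcomp (C.brecv a) (C.csend a))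

/-- The counit `ε : A^∘ ⊗ A^• → I` in `H D`, given by the vertical composite of
the `∘`-receive corner above the `•`-send corner. -/
def cornerCounit (D : SODC) (C : Cornering D) (a : D.H) :
    D.Cell D.hOne D.hOne (D.vMul (C.circ a) (C.bullet a)) D.vOne :=
  D.cast rfl rfl rfl (D.vOne_mul D.vOne) (D.vcomp (C.crecv a) (C.bsend a))

theorem SODC.cast_heq (D : SODC) {t t' b b' : D.H} {l l' r r' : D.V}
    (ht : t = t') (hb : b = b') (hl : l = l') (hr : r = r')
    (α : D.Cell t b l r) : HEq (D.cast ht hb hl hr α) α := by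
  cases ht; cases hb; cases hl; cases hr; rfl

theorem SODC.hcongr (D : SODC) {t b t' b' T B T' B' : D.H} {x y z X Y Z : D.V}
    (ht : t = T) (hb : b = B) (ht' : t' = T') (hb' : b' = B')
    (hx : x = X) (hy : y = Y) (hz : z = Z)
    {α : D.Cell t b x y} {β : D.Cell t' b' y z}
    {α' : D.Cell T B X Y} {β' : D.Cell T' B' Y Z}
    (hα : HEq α α') (hβ : HEq β β') :
    HEq (D.hcomp α β) (D.hcomp α' β') := by
  subst ht hb ht' hb' hx hy hz; cases hα; cases hβ; rfl

theorem SODC.vcongr (D : SODC) {t m b T M B : D.H} {x y x' y' X Y X' Y' : D.V}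
    (ht : t = T) (hm : m = M) (hb : b = B)
    (hx : x = X) (hy : y = Y) (hx' : x' = X') (hy' : y' = Y')
    {α : D.Cell t m x y} {β : D.Cell m b x' y'}
    {α' : D.Cell T M X Y} {β' : D.Cell M B X' Y'}
    (hα : HEq α α') (hβ : HEq β β') :
    HEq (D.vcomp α β) (D.vcomp α' β') := by
  subst ht hm hb hx hy hx' hy'; cases hα; cases hβ; rfl

/-- Let `𝔸` be a symmetric strict monoidal category and `D` a
cornering of `𝔸`.  Then for every object `A` of `𝔸`, the object `A^∘` is a
right dual of `A^•` in the strict monoidal category `H D` of horizontal cells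
of `D`: the unit `η : I → A^• ⊗ A^∘` given by the vertical composite of the
`•`-receive corner above the `∘`-send corner, and the counit
`ε : A^∘ ⊗ A^• → I` given by the vertical composite of the `∘`-receive corner
above the `•`-send corner, satisfy the triangle (zig-zag) identities. -/
theorem circ_rightDual_bullet (D : SODC) (C : Cornering D) :
    ∀ a : D.H,
      HEq (D.hcomp (D.vcomp (cornerUnit D C a) (D.hid (C.bullet a)))
            (D.cast rfl rfl (D.vMul_assoc (C.bullet a) (C.circ a) (C.bullet a)).symm rfl
              (D.vcomp (D.hid (C.bullet a)) (cornerCounit D C a))))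
          (D.hid (C.bullet a)) ∧
      HEq (D.hcomp (D.vcomp (D.hid (C.circ a)) (cornerUnit D C a))
            (D.cast rfl rfl (D.vMul_assoc (C.circ a) (C.bullet a) (C.circ a)) rfl
              (D.vcomp (cornerCounit D C a) (D.hid (C.circ a)))))
          (D.hid (C.circ a)) := by
  intro a
  set Bu := C.bullet a with hBuDef
  set Ci := C.circ a with hCiDef
  constructor
  · -- triangle 1
    have h1 : HEq (D.vcomp (cornerUnit D C a) (D.hid Bu))
        (D.vcomp (C.brecv a) (D.vcomp (C.csend a) (D.hid Bu))) := by
      refine HEq.trans ?_ (D.vcomp_assoc (C.brecv a) (C.csend a) (D.hid Bu))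
      exact D.vcongr rfl rfl rfl (D.vOne_mul D.vOne).symm rfl rfl rfl
        (D.cast_heq _ _ _ _ _) HEq.rfl
    have h2 : HEq (D.cast rfl rfl (D.vMul_assoc Bu Ci Bu).symm rfl
          (D.vcomp (D.hid Bu) (cornerCounit D C a)))
        (D.vcomp (D.hid Bu) (D.vcomp (C.crecv a) (C.bsend a))) := by
      refine HEq.trans (D.cast_heq _ _ _ _ _) ?_
      exact D.vcongr rfl rfl rfl rfl rfl rfl (D.vOne_mul D.vOne).symm
        HEq.rfl (D.cast_heq _ _ _ _ _)
    refine HEq.trans (D.hcongr rfl rfl rfl rfl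
        (congrArg (D.vMul D.vOne) (D.vOne_mul Bu).symm)
        (D.vMul_assoc Bu Ci Bu)
        (congrArg (D.vMul Bu) (D.vOne_mul D.vOne).symm)
        h1 h2) ?_
    refine HEq.trans (heq_of_eq
      (D.interchange (C.brecv a) (D.hid Bu)
        (D.vcomp (C.csend a) (D.hid Bu)) (D.vcomp (C.crecv a) (C.bsend a))).symm) ?_
    have hXY : HEq (D.hcomp (D.vcomp (C.csend a) (D.hid Bu))
          (D.vcomp (C.crecv a) (C.bsend a))) (C.bsend a) := by
      refine HEq.trans (heq_of_eq
        (D.interchange (C.csend a) (C.crecv a) (D.hid Bu) (C.bsend a)).symm) ?_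
      refine HEq.trans (D.vcongr (D.hMul_one a) (D.hOne_mul a) (D.hOne_mul D.hOne)
        rfl rfl rfl rfl (C.yank_circ_h a) (D.hid_hcomp (C.bsend a))) ?_
      exact D.vid_vcomp (C.bsend a)
    refine HEq.trans (D.vcongr (D.hOne_mul D.hOne) (D.hMul_one a) (D.hMul_one D.hOne)
      rfl rfl (D.vOne_mul Bu) (D.vOne_mul D.vOne)
      (D.hcomp_hid (C.brecv a)) hXY) ?_
    exact C.yank_bullet_v a
  · -- triangle 2
    have h1 : HEq (D.vcomp (D.hid Ci) (cornerUnit D C a))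
        (D.vcomp (D.vcomp (D.hid Ci) (C.brecv a)) (C.csend a)) := by
      refine HEq.trans ?_ (D.vcomp_assoc (D.hid Ci) (C.brecv a) (C.csend a)).symm
      exact D.vcongr rfl rfl rfl rfl rfl (D.vOne_mul D.vOne).symm rfl
        HEq.rfl (D.cast_heq _ _ _ _ _)
    have h2 : HEq (D.cast rfl rfl (D.vMul_assoc Ci Bu Ci) rfl
          (D.vcomp (cornerCounit D C a) (D.hid Ci)))
        (D.vcomp (D.vcomp (C.crecv a) (C.bsend a)) (D.hid Ci)) := by
      refine HEq.trans (D.cast_heq _ _ _ _ _) ?_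
      exact D.vcongr rfl rfl rfl rfl (D.vOne_mul D.vOne).symm rfl rfl
        (D.cast_heq _ _ _ _ _) HEq.rfl
    refine HEq.trans (D.hcongr rfl rfl rfl rfl
        (D.vMul_one (D.vMul Ci D.vOne)).symm
        (D.vMul_assoc Ci Bu Ci).symm
        (congrArg (fun w => D.vMul w Ci) (D.vOne_mul D.vOne).symm)
        h1 h2) ?_
    refine HEq.trans (heq_of_eq
      (D.interchange (D.vcomp (D.hid Ci) (C.brecv a)) (D.vcomp (C.crecv a) (C.bsend a))
        (C.csend a) (D.hid Ci)).symm) ?_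
    have hXY : HEq (D.hcomp (D.vcomp (D.hid Ci) (C.brecv a))
          (D.vcomp (C.crecv a) (C.bsend a))) (C.crecv a) := by
      refine HEq.trans (heq_of_eq
        (D.interchange (D.hid Ci) (C.crecv a) (C.brecv a) (C.bsend a)).symm) ?_
      refine HEq.trans (D.vcongr (D.hOne_mul D.hOne) (D.hOne_mul a) (D.hMul_one a)
        rfl rfl rfl rfl (D.hid_hcomp (C.crecv a)) (C.yank_bullet_h a)) ?_
      exact D.vcomp_vid (C.crecv a)
    refine HEq.trans (D.vcongr (D.hOne_mul D.hOne) (D.hMul_one a) (D.hOne_mul D.hOne)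
      (D.vMul_one Ci) (D.vOne_mul D.vOne) rfl rfl
      hXY (D.hcomp_hid (C.csend a))) ?_
    exact C.yank_circ_v a
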